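/- arXiv:math/0209038 — 4 statements merged into one kernel-verified Lean document; each statement's English description precedes it below -/
import Mathlib

section
/- Define a relation on forests of leaf-labeled rooted binary trees on a fixed finite set I by: F' ≤ F iff there is an injection φ from the inner vertices of F' to the inner vertices of F such that for every inner vertex v of F' the set of ancestor leaves of v in F' is contained in the set of ancestor leaves of φ(v) in F, and φ preserves the ancestor relation among inner vertices (if v is on the path from w to the root in F', then φ(v) is on the path from φ(w) to the root in F). Then ≤ is a partial order on the set of forests on I. -/
open Finset

/-- A forest of leaf-labeled rooted binary trees on a ground set of labels,
encoded by the family of "clades": for each inner vertex, the set of its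
ancestor leaves. Laminarity plus the binary splitting condition exactly
characterize such forests, and inner vertices correspond bijectively to clades. -/
structure Forest (I : Type*) [DecidableEq I] where
  ground : Finset I
  clades : Finset (Finset I)
  subset_ground : ∀ C ∈ clades, C ⊆ ground
  laminar : ∀ C ∈ clades, ∀ D ∈ clades, C ⊆ D ∨ D ⊆ C ∨ Disjoint C D
  binary : ∀ C ∈ clades, ∃ A B : Finset I,
      (A ∈ clades ∨ ∃ x, A = {x}) ∧ (B ∈ clades ∨ ∃ x, B = {x}) ∧
      Disjoint A B ∧ A ∪ B = C ∧ A ≠ C ∧ B ≠ C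

namespace Forest

variable {I : Type*} [DecidableEq I]

/-- The partial order on forests of the paper: `F' ≤ F` iff there is an injection
of the inner vertices of `F'` into those of `F` which enlarges ancestor-leaf sets
and preserves the ancestor relation among inner vertices. -/
def Le (F' F : Forest I) : Prop :=
  F'.ground = F.ground ∧ ∃ φ : Finset I → Finset I,
    Set.InjOn φ (F'.clades : Set (Finset I)) ∧
    (∀ C ∈ F'.clades, φ C ∈ F.clades) ∧
    (∀ C ∈ F'.clades, C ⊆ φ C) ∧
    (∀ C ∈ F'.clades, ∀ D ∈ F'.clades, C ⊆ D → φ C ⊆ φ D)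

/-- `γ(F,V)`: the set of forests `F' ≤ F` whose inner vertices are identified,
via the order-defining injection, with the subset `V` of inner vertices of `F`. -/
def gamma (F : Forest I) (V : Finset (Finset I)) : Set (Forest I) :=
  {F' | F'.ground = F.ground ∧ ∃ φ : Finset I → Finset I,
    Set.InjOn φ (F'.clades : Set (Finset I)) ∧
    (∀ C ∈ F'.clades, φ C ∈ F.clades) ∧
    (∀ C ∈ F'.clades, C ⊆ φ C) ∧
    (∀ C ∈ F'.clades, ∀ D ∈ F'.clades, C ⊆ D → φ C ⊆ φ D) ∧
    F'.clades.image φ = V}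

/-- A forest consisting of a single tree. -/
def IsTree (F : Forest I) : Prop :=
  F.ground.Nonempty ∧ (F.ground ∈ F.clades ∨ F.ground.card = 1)

/-- The support: leaves whose path to the root contains at least one inner vertex. -/
def supp (F : Forest I) : Finset I := F.clades.sup id

/-- The leaf-label sets of the trees of the forest: maximal clades together with
the singletons of labels not lying in any clade. -/
def rootBlocks (F : Forest I) : Finset (Finset I) :=
  F.clades.filter (fun C => ∀ D ∈ F.clades, C ⊆ D → C = D) ∪
  (F.ground.filter (fun x => ∀ C ∈ F.clades, x ∉ C)).image
    (fun x => ({x} : Finset I))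

end Forest

/-!
Weigh a family of clades by its total size `∑ |C|`. An injection into another family that
enlarges every clade can only increase the weight, and if it does not, every clade is sent to
itself, so the first family is contained in the second. Two forests with `F ≤ G ≤ F` therefore
have the same clades, hence the same inner vertices.
-/

section InflatingInjection

variable {α : Type*} [DecidableEq α] {s t : Finset (Finset α)} {φ : Finset α → Finset α}

lemma sum_card_apply_le_of_injOn (hinj : Set.InjOn φ s) (hmaps : Set.MapsTo φ s t) :
    ∑ C ∈ s, (φ C).card ≤ ∑ D ∈ t, D.card := by
  rw [← sum_image fun _ hC _ hD h => hinj hC hD h]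
  exact sum_le_sum_of_subset (image_subset_iff.mpr hmaps)

lemma sum_card_le_of_injOn_of_subset_apply (hinj : Set.InjOn φ s) (hmaps : Set.MapsTo φ s t)
    (hsub : ∀ C ∈ s, C ⊆ φ C) :
    ∑ C ∈ s, C.card ≤ ∑ D ∈ t, D.card :=
  (sum_le_sum fun C hC => card_le_card (hsub C hC)).trans (sum_card_apply_le_of_injOn hinj hmaps)

lemma subset_of_injOn_of_subset_apply (hinj : Set.InjOn φ s) (hmaps : Set.MapsTo φ s t)
    (hsub : ∀ C ∈ s, C ⊆ φ C) (hweight : ∑ D ∈ t, D.card ≤ ∑ C ∈ s, C.card) : s ⊆ t := by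
  have hsum : ∑ C ∈ s, C.card = ∑ C ∈ s, (φ C).card :=
    le_antisymm (sum_le_sum fun C hC => card_le_card (hsub C hC))
      ((sum_card_apply_le_of_injOn hinj hmaps).trans hweight)
  have hcard := (sum_eq_sum_iff_of_le fun C hC => card_le_card (hsub C hC)).mp hsum
  intro C hC
  have hfix : C = φ C := eq_of_subset_of_card_le (hsub C hC) (hcard C hC).ge
  exact hfix ▸ hmaps hC

end InflatingInjection

namespace Forest

variable {I : Type*} [DecidableEq I]

theorem ext {F G : Forest I} (hground : F.ground = G.ground) (hclades : F.clades = G.clades) :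
    F = G := by
  cases F
  cases G
  simp_all

theorem le_refl (F : Forest I) : F.Le F :=
  ⟨rfl, id, Set.injOn_id _, fun _ hC => hC, fun _ _ => subset_rfl, fun _ _ _ _ h => h⟩

theorem le_trans {F G H : Forest I} : F.Le G → G.Le H → F.Le H := by
  rintro ⟨hFG, φ, hφinj, hφmem, hφsub, hφmono⟩ ⟨hGH, ψ, hψinj, hψmem, hψsub, hψmono⟩
  exact ⟨hFG.trans hGH, ψ ∘ φ, hψinj.comp hφinj fun _ hC => hφmem _ hC,
    fun C hC => hψmem _ (hφmem C hC),
    fun C hC => (hφsub C hC).trans (hψsub _ (hφmem C hC)),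
    fun C hC D hD h => hψmono _ (hφmem C hC) _ (hφmem D hD) (hφmono C hC D hD h)⟩

theorem sum_card_clades_le_of_le {F G : Forest I} (h : F.Le G) :
    ∑ C ∈ F.clades, C.card ≤ ∑ D ∈ G.clades, D.card := by
  obtain ⟨-, φ, hinj, hmem, hsub, -⟩ := h
  exact sum_card_le_of_injOn_of_subset_apply hinj (fun _ hC => hmem _ hC) hsub

theorem clades_subset_of_le_of_le {F G : Forest I} (hFG : F.Le G) (hGF : G.Le F) :
    F.clades ⊆ G.clades := by
  obtain ⟨-, φ, hinj, hmem, hsub, -⟩ := hFG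
  exact subset_of_injOn_of_subset_apply hinj (fun _ hC => hmem _ hC) hsub
    (sum_card_clades_le_of_le hGF)

theorem le_antisymm {F G : Forest I} (hFG : F.Le G) (hGF : G.Le F) : F = G :=
  ext hFG.1 ((clades_subset_of_le_of_le hFG hGF).antisymm (clades_subset_of_le_of_le hGF hFG))

end Forest

/-- the relation `F' ≤ F` on forests of leaf-labeled rooted binary
trees (existence of an injection of inner vertices enlarging ancestor-leaf sets
and preserving the ancestor relation) is a partial order: reflexive, transitive
and antisymmetric. -/
theorem stmt_6 (I : Type*) [DecidableEq I] :
    Reflexive (Forest.Le (I := I)) ∧ Transitive (Forest.Le (I := I)) ∧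
      AntiSymmetric (Forest.Le (I := I)) :=
  ⟨Forest.le_refl, fun _ _ _ => Forest.le_trans, fun _ _ => Forest.le_antisymm⟩
end

section
/- In the poset of forests of leaf-labeled rooted binary trees on a finite set I (ordered as in the paper), the maximal elements are exactly the trees (forests consisting of a single tree), and the poset is ranked by the number of inner vertices: if F' < F and F covers F', then F has exactly one more inner vertex than F'. -/
open Finset

namespace ForestAux
open Forest

variable {I : Type*} [DecidableEq I]

lemma forest_ext {F G : Forest I} (h1 : F.ground = G.ground) (h2 : F.clades = G.clades) :
    F = G := by
  cases F; cases G; simp_all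

lemma empty_not_mem (F : Forest I) : ∅ ∉ F.clades := by
  intro h
  obtain ⟨A, B, _, _, _, hu, hA, _⟩ := F.binary ∅ h
  have hAe : A = ∅ := by
    have : A ⊆ ∅ := hu ▸ subset_union_left
    simpa using this
  exact hA hAe

lemma item_nonempty {F : Forest I} {A : Finset I} (h : A ∈ F.clades ∨ ∃ x, A = {x}) :
    A.Nonempty := by
  rcases h with h | ⟨x, rfl⟩
  · rcases eq_empty_or_nonempty A with rfl | h2
    · exact absurd h (empty_not_mem F)
    · exact h2
  · exact singleton_nonempty x

lemma clade_nonempty {F : Forest I} {C : Finset I} (h : C ∈ F.clades) : C.Nonempty :=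
  item_nonempty (Or.inl h)

lemma two_le_card {F : Forest I} {C : Finset I} (h : C ∈ F.clades) : 2 ≤ C.card := by
  obtain ⟨A, B, hA, hB, hd, hu, hAne, hBne⟩ := F.binary C h
  have hAn := item_nonempty hA
  have hBn := item_nonempty hB
  have h1 : 0 < A.card := hAn.card_pos
  have h2 : 0 < B.card := hBn.card_pos
  have : C.card = A.card + B.card := by
    rw [← hu, card_union_of_disjoint hd]
  omega

/-- If `C` is a clade strictly inside `A = A1 ∪ A2` (binary decomposition),
then `C` lies inside one of the two children. -/
lemma subset_child {F : Forest I} {A A1 A2 C : Finset I}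
    (h1 : A1 ∈ F.clades ∨ ∃ x, A1 = {x}) (h2 : A2 ∈ F.clades ∨ ∃ x, A2 = {x})
    (hd : Disjoint A1 A2) (hu : A1 ∪ A2 = A)
    (hC : C ∈ F.clades) (hCA : C ⊆ A) (hne : C ≠ A) :
    C ⊆ A1 ∨ C ⊆ A2 := by
  have hn1 := item_nonempty h1
  have hn2 := item_nonempty h2
  have key : ∀ {B D : Finset I}, (B ∈ F.clades ∨ ∃ x, B = {x}) → D ∈ F.clades →
      D ⊆ B ∨ B ⊆ D ∨ Disjoint D B := by
    intro B D hB hD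
    rcases hB with hB | ⟨x, rfl⟩
    · rcases F.laminar D hD B hB with h | h | h
      · exact Or.inl h
      · exact Or.inr (Or.inl h)
      · exact Or.inr (Or.inr h)
    · by_cases hx : x ∈ D
      · exact Or.inr (Or.inl (singleton_subset_iff.2 hx))
      · exact Or.inr (Or.inr (by simpa using hx))
  have hsub2 : Disjoint C A1 → C ⊆ A2 := by
    intro hdC
    intro x hx
    have : x ∈ A1 ∪ A2 := hu ▸ hCA hx
    rcases mem_union.1 this with h | h
    · exact absurd (hdC.forall_ne_finset hx h rfl) (fun h => h)
    · exact h
  have hsub1 : Disjoint C A2 → C ⊆ A1 := by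
    intro hdC
    intro x hx
    have : x ∈ A1 ∪ A2 := hu ▸ hCA hx
    rcases mem_union.1 this with h | h
    · exact h
    · exact absurd (hdC.forall_ne_finset hx h rfl) (fun h => h)
  rcases key h1 hC with h | h | h
  · exact Or.inl h
  · -- A1 ⊆ C
    rcases key h2 hC with h' | h' | h'
    · exact Or.inr h'
    · -- A2 ⊆ C : C = A
      exfalso
      exact hne (subset_antisymm hCA (hu ▸ union_subset h h'))
    · -- Disjoint C A2 : C ⊆ A1, so C = A1... fine, C ⊆ A1
      exact Or.inl (hsub1 h')
  · exact Or.inr (hsub2 h)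

/-- A maximal element of a nonempty finite family of finsets. -/
lemma exists_max_mem (s : Finset (Finset I)) (hs : s.Nonempty) :
    ∃ M ∈ s, ∀ D ∈ s, M ⊆ D → D = M := by
  obtain ⟨M, hM, hmax⟩ := s.exists_maximal hs
  exact ⟨M, hM, fun D hD hMD => by
    exact subset_antisymm (hmax hD hMD) hMD⟩

lemma subset_of_max {F : Forest I} {M X : Finset I} (hM : M ∈ F.clades)
    (hmax : ∀ D ∈ F.clades, M ⊆ D → D = M) (hX : X ∈ F.clades)
    (hnd : ¬ Disjoint X M) : X ⊆ M := by
  rcases F.laminar X hX M hM with h | h | h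
  · exact h
  · exact (hmax X hX h) ▸ Subset.rfl
  · exact absurd h hnd

/-- Remove a maximal clade from a forest. -/
def eraseTop (F : Forest I) (M : Finset I) (hM : M ∈ F.clades)
    (hmax : ∀ D ∈ F.clades, M ⊆ D → D = M) : Forest I where
  ground := F.ground
  clades := F.clades.erase M
  subset_ground := fun C hC => F.subset_ground C (mem_of_mem_erase hC)
  laminar := fun C hC D hD =>
    F.laminar C (mem_of_mem_erase hC) D (mem_of_mem_erase hD)
  binary := by
    intro C hC
    obtain ⟨A, B, hA, hB, hd, hu, hAne, hBne⟩ := F.binary C (mem_of_mem_erase hC)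
    have hCne : C ≠ M := ne_of_mem_erase hC
    have hCmem : C ∈ F.clades := mem_of_mem_erase hC
    refine ⟨A, B, ?_, ?_, hd, hu, hAne, hBne⟩
    · rcases hA with hA | hA
      · refine Or.inl (mem_erase.2 ⟨?_, hA⟩)
        intro h
        subst h
        exact hCne (hmax C hCmem (hu ▸ subset_union_left))
      · exact Or.inr hA
    · rcases hB with hB | hB
      · refine Or.inl (mem_erase.2 ⟨?_, hB⟩)
        intro h
        subst h
        exact hCne (hmax C hCmem (hu ▸ subset_union_right))
      · exact Or.inr hB


/-- Counting: the number of clades weakly below a clade-or-singleton `A` is `A.card - 1`. -/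
lemma card_filter_subset (F : Forest I) :
    ∀ (n : ℕ) (A : Finset I), A.card ≤ n → (A ∈ F.clades ∨ ∃ x, A = {x}) →
      (F.clades.filter (· ⊆ A)).card + 1 = A.card := by
  intro n
  induction n with
  | zero =>
      intro A hA hmem
      have := (item_nonempty hmem).card_pos
      omega
  | succ n ih =>
      intro A hA hmem
      rcases hmem with hmem | ⟨x, rfl⟩
      · obtain ⟨A1, A2, h1, h2, hd, hu, h1ne, h2ne⟩ := F.binary A hmem
        have hA1sub : A1 ⊆ A := hu ▸ subset_union_left
        have hA2sub : A2 ⊆ A := hu ▸ subset_union_right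
        have hA1lt : A1.card < A.card := card_lt_card (ssubset_of_subset_of_ne hA1sub h1ne)
        have hA2lt : A2.card < A.card := card_lt_card (ssubset_of_subset_of_ne hA2sub h2ne)
        have key : F.clades.filter (· ⊆ A) =
            insert A ((F.clades.filter (· ⊆ A1)) ∪ (F.clades.filter (· ⊆ A2))) := by
          ext C
          simp only [mem_filter, mem_insert, mem_union]
          constructor
          · rintro ⟨hC, hCA⟩
            by_cases hCeq : C = A
            · exact Or.inl hCeq
            · rcases subset_child h1 h2 hd hu hC hCA hCeq with h | h
              · exact Or.inr (Or.inl ⟨hC, h⟩)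
              · exact Or.inr (Or.inr ⟨hC, h⟩)
          · rintro (rfl | ⟨hC, hCA⟩ | ⟨hC, hCA⟩)
            · exact ⟨hmem, Subset.rfl⟩
            · exact ⟨hC, hCA.trans hA1sub⟩
            · exact ⟨hC, hCA.trans hA2sub⟩
        have hAnot : A ∉ (F.clades.filter (· ⊆ A1)) ∪ (F.clades.filter (· ⊆ A2)) := by
          simp only [mem_union, mem_filter]
          rintro (⟨_, h⟩ | ⟨_, h⟩)
          · exact h1ne (subset_antisymm hA1sub h)
          · exact h2ne (subset_antisymm hA2sub h)
        have hdisj : Disjoint (F.clades.filter (· ⊆ A1)) (F.clades.filter (· ⊆ A2)) := by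
          rw [disjoint_left]
          intro C hC1 hC2
          simp only [mem_filter] at hC1 hC2
          have : C ⊆ A1 ∩ A2 := subset_inter hC1.2 hC2.2
          rw [(disjoint_iff_inter_eq_empty.1 hd)] at this
          exact (clade_nonempty hC1.1).ne_empty (subset_empty.1 this)
        have e1 := ih A1 (by omega) h1
        have e2 := ih A2 (by omega) h2
        have hAcard : A.card = A1.card + A2.card := by
          rw [← hu, card_union_of_disjoint hd]
        rw [key, card_insert_of_notMem hAnot, card_union_of_disjoint hdisj]
        omega
      · have : F.clades.filter (· ⊆ ({x} : Finset I)) = ∅ := by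
          rw [filter_eq_empty_iff]
          intro C hC hsub
          have := two_le_card hC
          have := card_le_card hsub
          simp only [card_singleton] at this
          omega
        rw [this]
        simp

/-- Rigidity: if `F' ≤ F` with equally many clades then `F' = F`. -/
lemma rigid : ∀ (n : ℕ) (F' F : Forest I), F.clades.card ≤ n → Le F' F →
    F'.clades.card = F.clades.card → F' = F := by
  intro n
  induction n with
  | zero =>
      intro F' F hn hle hcard
      have hF : F.clades = ∅ := card_eq_zero.1 (by omega)
      have hF' : F'.clades = ∅ := card_eq_zero.1 (by omega)
      exact forest_ext hle.1 (hF' ▸ hF ▸ rfl)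
  | succ n ih =>
      intro F' F hn hle hcard
      obtain ⟨hg, φ, hinj, hmem, hsub, hmono⟩ := hle
      rcases eq_empty_or_nonempty F.clades with hFe | hFne
      · have hF' : F'.clades = ∅ := card_eq_zero.1 (by rw [hcard, hFe]; simp)
        exact forest_ext hg (hF' ▸ hFe ▸ rfl)
      obtain ⟨M, hM, hmax⟩ := exists_max_mem F.clades hFne
      -- surjectivity
      have himg : F'.clades.image φ = F.clades := by
        apply eq_of_subset_of_card_le
        · intro D hD
          obtain ⟨C, hC, rfl⟩ := mem_image.1 hD
          exact hmem C hC
        · rw [card_image_of_injOn hinj, hcard]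
      obtain ⟨C₀, hC₀, hφC₀⟩ := mem_image.1 (himg ▸ hM)
      have hC₀max : ∀ D ∈ F'.clades, C₀ ⊆ D → D = C₀ := by
        intro D hD hCD
        have h1 : φ C₀ ⊆ φ D := hmono C₀ hC₀ D hD hCD
        have h2 : φ D = M := hmax (φ D) (hmem D hD) (hφC₀ ▸ h1)
        exact hinj (mem_coe.2 hD) (mem_coe.2 hC₀) (h2.trans hφC₀.symm)
      -- erase both tops and recurse
      set F'e := eraseTop F' C₀ hC₀ hC₀max with hF'e
      set Fe := eraseTop F M hM hmax with hFe
      have hleE : Le F'e Fe := by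
        refine ⟨hg, φ, ?_, ?_, ?_, ?_⟩
        · intro x hx y hy hxy
          exact hinj (mem_coe.2 (mem_of_mem_erase (mem_coe.1 hx)))
            (mem_coe.2 (mem_of_mem_erase (mem_coe.1 hy))) hxy
        · intro C hC
          refine mem_erase.2 ⟨?_, hmem C (mem_of_mem_erase hC)⟩
          intro h
          exact (ne_of_mem_erase hC)
            (hinj (mem_coe.2 (mem_of_mem_erase hC)) (mem_coe.2 hC₀) (h.trans hφC₀.symm))
        · exact fun C hC => hsub C (mem_of_mem_erase hC)
        · exact fun C hC D hD h => hmono C (mem_of_mem_erase hC) D (mem_of_mem_erase hD) h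
      have hcardE : F'e.clades.card = Fe.clades.card := by
        show (F'.clades.erase C₀).card = (F.clades.erase M).card
        rw [card_erase_of_mem hC₀, card_erase_of_mem hM, hcard]
      have hnE : Fe.clades.card ≤ n := by
        show (F.clades.erase M).card ≤ n
        rw [card_erase_of_mem hM]
        omega
      have hEq := ih F'e Fe hnE hleE hcardE
      have hclE : F'.clades.erase C₀ = F.clades.erase M := congrArg Forest.clades hEq
      -- now show C₀ = M
      have hC₀M : C₀ ⊆ M := hφC₀ ▸ hsub C₀ hC₀
      have hC₀eq : C₀ = M := by
        obtain ⟨E1, E2, hE1, hE2, hEd, hEu, hE1ne, hE2ne⟩ := F.binary M hM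
        have key : ∀ {E : Finset I}, (E ∈ F.clades ∨ ∃ x, E = {x}) → E ≠ M →
            E ⊆ C₀ ∨ Disjoint E C₀ := by
          intro E hE hEne
          rcases hE with hE | ⟨x, rfl⟩
          · have hEmem : E ∈ F'.clades :=
              mem_of_mem_erase (hclE ▸ (mem_erase.2 ⟨hEne, hE⟩))
            rcases F'.laminar C₀ hC₀ E hEmem with h | h | h
            · exact Or.inl ((hC₀max E hEmem h) ▸ Subset.rfl)
            · exact Or.inl h
            · exact Or.inr h.symm
          · by_cases hx : x ∈ C₀
            · exact Or.inl (singleton_subset_iff.2 hx)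
            · exact Or.inr (by simpa using hx)
        have claim : ∀ {E E' : Finset I}, (E ∈ F.clades ∨ ∃ x, E = {x}) → E ≠ M →
            E ∪ E' = M → Disjoint E' C₀ → C₀ = M := by
          intro E E' hE hEneM hEu' hE'd
          exfalso
          have hCE : C₀ ⊆ E := by
            intro x hx
            have : x ∈ E ∪ E' := hEu' ▸ hC₀M hx
            rcases mem_union.1 this with h | h
            · exact h
            · exact absurd rfl (hE'd.forall_ne_finset h hx)
          rcases hE with hEm | ⟨x, rfl⟩
          · have hEmem : E ∈ F'.clades :=
              mem_of_mem_erase (hclE ▸ (mem_erase.2 ⟨hEneM, hEm⟩))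
            have heq : E = C₀ := hC₀max E hEmem hCE
            have : C₀ ∈ F'.clades.erase C₀ := by
              rw [hclE]
              exact mem_erase.2 ⟨heq ▸ hEneM, heq ▸ hEm⟩
            exact (ne_of_mem_erase this) rfl
          · have h1 := card_le_card hCE
            have h2 := two_le_card hC₀
            simp only [card_singleton] at h1
            omega
        rcases key hE1 hE1ne with h1 | h1
        · rcases key hE2 hE2ne with h2 | h2
          · exact subset_antisymm hC₀M (hEu ▸ union_subset h1 h2)
          · exact claim hE1 hE1ne hEu h2
        · exact claim hE2 hE2ne (by rw [union_comm]; exact hEu) h1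
      rw [hC₀eq] at hclE hC₀
      apply forest_ext hg
      rw [← insert_erase hC₀, hclE, insert_erase hM]

/-- One-step interpolation: if `F' < F` then there is `G` between them with
one clade fewer than `F`. -/
lemma star : ∀ (n : ℕ) (F' F : Forest I), F.clades.card ≤ n → Le F' F →
    F'.clades.card < F.clades.card →
    ∃ G : Forest I, Le F' G ∧ Le G F ∧ G.clades.card + 1 = F.clades.card := by
  intro n
  induction n with
  | zero =>
      intro F' F hn hle hlt
      exact absurd hlt (by omega)
  | succ n ih =>
      intro F' F hn hle hlt
      obtain ⟨hg, φ, hinj, hmem, hsub, hmono⟩ := hle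
      have hFne : F.clades.Nonempty := card_pos.1 (by omega)
      obtain ⟨M, hM, hmax⟩ := exists_max_mem F.clades hFne
      by_cases hMin : M ∈ F'.clades.image φ
      · -- Case B : the chosen maximal clade is in the image
        obtain ⟨C₀, hC₀, hφC₀⟩ := mem_image.1 hMin
        have hC₀max : ∀ D ∈ F'.clades, C₀ ⊆ D → D = C₀ := by
          intro D hD hCD
          have h1 : φ C₀ ⊆ φ D := hmono C₀ hC₀ D hD hCD
          have h2 : φ D = M := hmax (φ D) (hmem D hD) (hφC₀ ▸ h1)
          exact hinj (mem_coe.2 hD) (mem_coe.2 hC₀) (h2.trans hφC₀.symm)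
        set F'e := eraseTop F' C₀ hC₀ hC₀max with hF'edef
        set Fe := eraseTop F M hM hmax with hFedef
        have hF'ecl : F'e.clades = F'.clades.erase C₀ := rfl
        have hFecl : Fe.clades = F.clades.erase M := rfl
        have hleE : Le F'e Fe := by
          refine ⟨hg, φ, ?_, ?_, ?_, ?_⟩
          · intro x hx y hy hxy
            exact hinj (mem_coe.2 (mem_of_mem_erase (mem_coe.1 hx)))
              (mem_coe.2 (mem_of_mem_erase (mem_coe.1 hy))) hxy
          · intro C hC
            refine mem_erase.2 ⟨?_, hmem C (mem_of_mem_erase hC)⟩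
            intro h
            exact (ne_of_mem_erase hC)
              (hinj (mem_coe.2 (mem_of_mem_erase hC)) (mem_coe.2 hC₀) (h.trans hφC₀.symm))
          · exact fun C hC => hsub C (mem_of_mem_erase hC)
          · exact fun C hC D hD h => hmono C (mem_of_mem_erase hC) D (mem_of_mem_erase hD) h
        have hcardE : F'e.clades.card < Fe.clades.card := by
          rw [hF'ecl, hFecl, card_erase_of_mem hC₀, card_erase_of_mem hM]
          have := card_pos.2 ⟨C₀, hC₀⟩
          omega
        have hnE : Fe.clades.card ≤ n := by
          rw [hFecl, card_erase_of_mem hM]; omega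
        obtain ⟨G₀, hle1, hle2, hcardG⟩ := ih F'e Fe hnE hleE hcardE
        obtain ⟨hg1, ψ, ψinj, ψmem, ψsub, ψmono⟩ := hle1
        obtain ⟨hg2, χ, χinj, χmem, χsub, χmono⟩ := hle2
        have hgG : G₀.ground = F.ground := hg2
        have hC₀M : C₀ ⊆ M := hφC₀ ▸ hsub C₀ hC₀
        obtain ⟨a1, a2, ha1, ha2, had, hau, ha1ne, ha2ne⟩ := F'.binary C₀ hC₀
        have ha1sub : a1 ⊆ C₀ := hau ▸ subset_union_left
        have ha2sub : a2 ⊆ C₀ := hau ▸ subset_union_right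
        obtain ⟨z1, hz1⟩ := item_nonempty ha1
        obtain ⟨z2, hz2⟩ := item_nonempty ha2
        have hz1M : z1 ∈ M := hC₀M (ha1sub hz1)
        have hz2M : z2 ∈ M := hC₀M (ha2sub hz2)
        have hz12 : z1 ≠ z2 := had.forall_ne_finset hz1 hz2
        have χmem' : ∀ X ∈ G₀.clades, χ X ∈ F.clades ∧ χ X ≠ M := fun X hX =>
          ⟨mem_of_mem_erase (χmem X hX), ne_of_mem_erase (χmem X hX)⟩
        have hTsub : ∀ X ∈ G₀.clades, ∀ z, z ∈ M → z ∈ X → χ X ⊆ M := by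
          intro X hX z hzM hzX
          exact subset_of_max hM hmax (χmem' X hX).1
            (Finset.not_disjoint_iff.2 ⟨z, χsub X hX hzX, hzM⟩)
        -- block structure in G₀ over a point of M
        have hblk : ∀ z ∈ M, ∃ W : Finset I,
            z ∈ W ∧ W ⊆ M ∧
            (W ∈ G₀.clades ∨ (W = {z} ∧ ∀ X ∈ G₀.clades, z ∉ X)) ∧
            (∀ X ∈ G₀.clades, z ∈ X → X ⊆ W) ∧
            (∀ X ∈ G₀.clades, X ⊆ W ∨ Disjoint X W) := by
          intro z hz
          rcases (G₀.clades.filter (fun X => z ∈ X)).eq_empty_or_nonempty with hTe | hTne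
          · have hzn : ∀ X ∈ G₀.clades, z ∉ X := by
              intro X hX hzX
              have : X ∈ G₀.clades.filter (fun X => z ∈ X) := mem_filter.2 ⟨hX, hzX⟩
              rw [hTe] at this
              exact absurd this (notMem_empty X)
            refine ⟨{z}, mem_singleton_self z, singleton_subset_iff.2 hz,
              Or.inr ⟨rfl, hzn⟩, ?_, ?_⟩
            · intro X hX hzX
              exact absurd hzX (hzn X hX)
            · intro X hX
              exact Or.inr (disjoint_singleton_right.2 (hzn X hX))
          · obtain ⟨W, hWTz, hWmax⟩ := exists_max_mem _ hTne
            have hWG : W ∈ G₀.clades := (mem_filter.1 hWTz).1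
            have hzW : z ∈ W := (mem_filter.1 hWTz).2
            have habs : ∀ X ∈ G₀.clades, z ∈ X → X ⊆ W := by
              intro X hX hzX
              rcases G₀.laminar X hX W hWG with h | h | h
              · exact h
              · exact (hWmax X (mem_filter.2 ⟨hX, hzX⟩) h) ▸ Subset.rfl
              · exact absurd h (Finset.not_disjoint_iff.2 ⟨z, hzX, hzW⟩)
            refine ⟨W, hzW, (χsub W hWG).trans (hTsub W hWG z hz hzW), Or.inl hWG, habs, ?_⟩
            intro X hX
            rcases G₀.laminar X hX W hWG with h | h | h
            · exact Or.inl h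
            · exact Or.inl (habs X hX (h hzW))
            · exact Or.inr h
        obtain ⟨W1, hz1W, hW1M, hW1mem, hW1abs, hW1lam⟩ := hblk z1 hz1M
        obtain ⟨W2, hz2W, hW2M, hW2mem, hW2abs, hW2lam⟩ := hblk z2 hz2M
        have hW1ne : W1.Nonempty := ⟨z1, hz1W⟩
        -- children lie inside their blocks
        have haW : ∀ (a : Finset I) (z : I) (W : Finset I),
            (a ∈ F'.clades ∨ ∃ x, a = {x}) → a ≠ C₀ → z ∈ a → z ∈ W →
            (∀ X ∈ G₀.clades, z ∈ X → X ⊆ W) → a ⊆ W := by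
          intro a z W hca hane hza hzW habs
          rcases hca with h | ⟨x, rfl⟩
          · have hae : a ∈ F'e.clades := mem_erase.2 ⟨hane, h⟩
            exact (ψsub _ hae).trans (habs _ (ψmem _ hae) (ψsub _ hae hza))
          · have hxz : x = z := by
              have := hza; simp only [mem_singleton] at this; exact this.symm
            subst hxz
            exact singleton_subset_iff.2 hzW
        have ha1W : a1 ⊆ W1 := haW a1 z1 W1 ha1 ha1ne hz1 hz1W hW1abs
        have ha2W : a2 ⊆ W2 := haW a2 z2 W2 ha2 ha2ne hz2 hz2W hW2abs
        have hpsiW : ∀ (a : Finset I) (z : I) (W : Finset I),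
            (a ∈ F'.clades ∨ ∃ x, a = {x}) → a ≠ C₀ → z ∈ a → z ∈ W →
            (∀ X ∈ G₀.clades, z ∈ X → X ⊆ W) →
            ∀ C ∈ F'.clades, C ≠ C₀ → C ⊆ a → ψ C ⊆ W := by
          intro a z W hca hane hza hzW habs C hC hCne hCa
          rcases hca with h | ⟨x, rfl⟩
          · have hae : a ∈ F'e.clades := mem_erase.2 ⟨hane, h⟩
            have hCe : C ∈ F'e.clades := mem_erase.2 ⟨hCne, hC⟩
            exact (ψmono C hCe a hae hCa).trans
              (habs _ (ψmem _ hae) (ψsub _ hae hza))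
          · exfalso
            have h1 := card_le_card hCa
            have h2 := two_le_card hC
            simp only [card_singleton] at h1
            omega
        -- produce the second component of the new root clade
        have hBig : ∃ B2 : Finset I, (B2 ∈ G₀.clades ∨ ∃ x, B2 = {x}) ∧ B2.Nonempty ∧
            Disjoint W1 B2 ∧ B2 ⊆ M ∧ (B2 ∈ G₀.clades → χ B2 ⊆ M) ∧
            (∀ X ∈ G₀.clades, X ⊆ B2 ∨ Disjoint X B2) ∧ C₀ ⊆ W1 ∪ B2 ∧
            (∀ C ∈ F'.clades, C ≠ C₀ → C ⊆ C₀ → ψ C ⊆ W1 ∪ B2) := by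
          by_cases hWW : W1 = W2
          · -- both children sit under the same block W1; find a disjoint companion
            have hW1G : W1 ∈ G₀.clades := by
              rcases hW1mem with h | ⟨h, _⟩
              · exact h
              · exfalso
                have : z2 ∈ W1 := hWW ▸ hz2W
                rw [h, mem_singleton] at this
                exact hz12 this.symm
            have hC₀W1 : C₀ ⊆ W1 := by
              rw [← hau]
              exact union_subset ha1W (hWW ▸ ha2W)
            have hpsiR' : ∀ C ∈ F'.clades, C ≠ C₀ → C ⊆ C₀ → ψ C ⊆ W1 := by
              intro C hC hCne hCC₀
              rcases subset_child ha1 ha2 had hau hC hCC₀ hCne with h | h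
              · exact hpsiW a1 z1 W1 ha1 ha1ne hz1 hz1W hW1abs C hC hCne h
              · exact hWW ▸ hpsiW a2 z2 W2 ha2 ha2ne hz2 hz2W hW2abs C hC hCne h
            have hχW1 : χ W1 ⊆ M := hTsub W1 hW1G z1 hz1M hz1W
            rcases (G₀.clades.filter (fun X => χ X ⊆ M ∧ Disjoint X W1)).eq_empty_or_nonempty
              with hSe | hSne
            · -- no clade companion: pick a fresh point y ∈ M \ χ W1
              have hssub : χ W1 ⊂ M :=
                ssubset_of_subset_of_ne hχW1 (χmem' W1 hW1G).2
              obtain ⟨y, hyM, hyW⟩ := exists_of_ssubset hssub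
              have hynot : ∀ X ∈ G₀.clades, y ∉ X := by
                intro X hX hyX
                have hχXM : χ X ⊆ M := hTsub X hX y hyM hyX
                rcases hW1lam X hX with h | h
                · exact hyW ((χsub W1 hW1G) (h hyX))
                · have : X ∈ G₀.clades.filter (fun X => χ X ⊆ M ∧ Disjoint X W1) :=
                    mem_filter.2 ⟨hX, hχXM, h⟩
                  rw [hSe] at this
                  exact absurd this (notMem_empty X)
              refine ⟨{y}, Or.inr ⟨y, rfl⟩, singleton_nonempty y, ?_,
                singleton_subset_iff.2 hyM, ?_, ?_, ?_, ?_⟩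
              · rw [disjoint_singleton_right]
                intro hyW1
                exact hyW ((χsub W1 hW1G) hyW1)
              · intro h
                exact absurd (mem_singleton_self y) (hynot _ h)
              · intro X hX
                exact Or.inr (disjoint_singleton_right.2 (hynot X hX))
              · exact hC₀W1.trans subset_union_left
              · intro C hC hCne hCC₀
                exact (hpsiR' C hC hCne hCC₀).trans subset_union_left
            · obtain ⟨s, hsS, hsmax⟩ := exists_max_mem _ hSne
              obtain ⟨hsG, hsχ, hsd⟩ : s ∈ G₀.clades ∧ χ s ⊆ M ∧ Disjoint s W1 := by
                have := mem_filter.1 hsS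
                exact ⟨this.1, this.2.1, this.2.2⟩
              have hsM : s ⊆ M := (χsub s hsG).trans hsχ
              have hsne : s.Nonempty := by
                rcases eq_empty_or_nonempty s with rfl | h
                · exact absurd hsG (empty_not_mem G₀)
                · exact h
              have hslam : ∀ X ∈ G₀.clades, X ⊆ s ∨ Disjoint X s := by
                intro X hX
                by_cases hdXs : Disjoint X s
                · exact Or.inr hdXs
                obtain ⟨t, htX, hts⟩ := Finset.not_disjoint_iff.1 hdXs
                have hXT : χ X ⊆ M := hTsub X hX t (hsM hts) htX
                rcases G₀.laminar X hX s hsG with h | h | h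
                · exact Or.inl h
                · have hdXW : Disjoint X W1 := by
                    by_contra hnd
                    obtain ⟨u, huX, huW⟩ := Finset.not_disjoint_iff.1 hnd
                    rcases hW1lam X hX with h' | h'
                    · exact (Finset.not_disjoint_iff.2 ⟨t, hts, h' (h hts)⟩) hsd
                    · exact (Finset.not_disjoint_iff.2 ⟨u, huX, huW⟩) h'
                  have : X = s := hsmax X (mem_filter.2 ⟨hX, hXT, hdXW⟩) h
                  exact Or.inl (this ▸ Subset.rfl)
                · exact absurd h (Finset.not_disjoint_iff.2 ⟨t, htX, hts⟩)
              refine ⟨s, Or.inl hsG, hsne, hsd.symm, hsM, fun _ => hsχ, hslam,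
                hC₀W1.trans subset_union_left, ?_⟩
              intro C hC hCne hCC₀
              exact (hpsiR' C hC hCne hCC₀).trans subset_union_left
          · -- W1 ≠ W2 : they are disjoint, take B2 := W2
            have hd12 : Disjoint W1 W2 := by
              by_contra hnd
              obtain ⟨t, ht1, ht2⟩ := Finset.not_disjoint_iff.1 hnd
              rcases hW1mem with h1 | ⟨h1, h1n⟩
              · rcases hW2mem with h2 | ⟨h2, h2n⟩
                · rcases hW1lam W2 h2 with h | h
                  · exact hWW (subset_antisymm (hW2abs W1 h1 (h hz2W)) h)
                  · exact (Finset.not_disjoint_iff.2 ⟨t, ht2, ht1⟩) h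
                · have : t = z2 := by rw [h2, mem_singleton] at ht2; exact ht2
                  exact (h2n W1 h1) (this ▸ ht1)
              · have : t = z1 := by rw [h1, mem_singleton] at ht1; exact ht1
                rcases hW2mem with h2 | ⟨h2, h2n⟩
                · exact (h1n W2 h2) (this ▸ ht2)
                · rw [h1] at ht1
                  rw [h2] at ht2
                  rw [mem_singleton] at ht1 ht2
                  exact hz12 (ht1.symm.trans ht2)
            have hW2mem' : W2 ∈ G₀.clades ∨ ∃ x, W2 = {x} := by
              rcases hW2mem with h | ⟨h, _⟩
              · exact Or.inl h
              · exact Or.inr ⟨z2, h⟩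
            refine ⟨W2, hW2mem', ⟨z2, hz2W⟩, hd12, hW2M,
              fun h => hTsub W2 h z2 hz2M hz2W, hW2lam, ?_, ?_⟩
            · rw [← hau]
              exact union_subset (ha1W.trans subset_union_left)
                (ha2W.trans subset_union_right)
            · intro C hC hCne hCC₀
              rcases subset_child ha1 ha2 had hau hC hCC₀ hCne with h | h
              · exact (hpsiW a1 z1 W1 ha1 ha1ne hz1 hz1W hW1abs C hC hCne h).trans
                  subset_union_left
              · exact (hpsiW a2 z2 W2 ha2 ha2ne hz2 hz2W hW2abs C hC hCne h).trans
                  subset_union_right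
        obtain ⟨B2, hB2mem, hB2ne, hdW, hB2M, hB2chi, hB2lam, hC₀R, hpsiR⟩ := hBig
        set R := W1 ∪ B2 with hRdef
        have hW1mem' : W1 ∈ G₀.clades ∨ ∃ x, W1 = {x} := by
          rcases hW1mem with h | ⟨h, _⟩
          · exact Or.inl h
          · exact Or.inr ⟨z1, h⟩
        have hRM : R ⊆ M := union_subset hW1M hB2M
        have hW1abs' : ∀ X ∈ G₀.clades, W1 ⊆ X → X ⊆ W1 := by
          intro X hX h
          rcases hW1mem with h1 | ⟨h1, h1n⟩
          · exact hW1abs X hX (h hz1W)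
          · exact absurd (h (h1 ▸ mem_singleton_self z1)) ((h1n X hX))
        have hRnotsub : ∀ X ∈ G₀.clades, ¬ R ⊆ X := by
          intro X hX h
          have h1 : W1 ⊆ X := subset_union_left.trans h
          have h2 : X ⊆ W1 := hW1abs' X hX h1
          obtain ⟨b, hb⟩ := hB2ne
          exact (Finset.not_disjoint_iff.2 ⟨b, h2 (h (mem_union_right W1 hb)), hb⟩) hdW
        have hRnot : R ∉ G₀.clades := fun h => hRnotsub R h Subset.rfl
        have hXR : ∀ X ∈ G₀.clades, X ⊆ R ∨ Disjoint X R := by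
          intro X hX
          rcases hW1lam X hX with h | h
          · exact Or.inl (h.trans subset_union_left)
          · rcases hB2lam X hX with h' | h'
            · exact Or.inl (h'.trans subset_union_right)
            · exact Or.inr (disjoint_union_right.2 ⟨h, h'⟩)
        have hXRchi : ∀ X ∈ G₀.clades, X ⊆ R → χ X ⊆ M := by
          intro X hX h
          rcases hW1lam X hX with h1 | h1
          · rcases hW1mem with hm | ⟨hm, _⟩
            · exact (χmono X hX W1 hm h1).trans (hTsub W1 hm z1 hz1M hz1W)
            · exfalso
              have hc1 := card_le_card h1
              have hc2 := two_le_card hX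
              rw [hm, card_singleton] at hc1
              omega
          · rcases hB2lam X hX with h2 | h2
            · rcases hB2mem with hm | ⟨x, hm⟩
              · exact (χmono X hX B2 hm h2).trans (hB2chi hm)
              · exfalso
                have hc1 := card_le_card h2
                have hc2 := two_le_card hX
                rw [hm, card_singleton] at hc1
                omega
            · exfalso
              obtain ⟨u, hu⟩ := clade_nonempty hX
              rcases mem_union.1 (h hu) with h' | h'
              · exact (Finset.not_disjoint_iff.2 ⟨u, hu, h'⟩) h1
              · exact (Finset.not_disjoint_iff.2 ⟨u, hu, h'⟩) h2
        have hW1neR : W1 ≠ R := by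
          intro h
          obtain ⟨b, hb⟩ := hB2ne
          exact (Finset.not_disjoint_iff.2 ⟨b, h ▸ mem_union_right W1 hb, hb⟩) hdW
        have hB2neR : B2 ≠ R := by
          intro h
          exact (Finset.not_disjoint_iff.2 ⟨z1, hz1W, h ▸ mem_union_left B2 hz1W⟩) hdW
        -- the interpolating forest
        refine ⟨⟨F.ground, insert R G₀.clades, ?_, ?_, ?_⟩, ?_, ?_, ?_⟩
        · -- subset_ground
          intro C hC
          rcases mem_insert.1 hC with rfl | hC
          · exact hRM.trans (F.subset_ground M hM)
          · exact hgG ▸ G₀.subset_ground C hC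
        · -- laminar
          intro C hC D hD
          rcases mem_insert.1 hC with rfl | hC
          · rcases mem_insert.1 hD with rfl | hD
            · exact Or.inl Subset.rfl
            · rcases hXR D hD with h | h
              · exact Or.inr (Or.inl h)
              · exact Or.inr (Or.inr h.symm)
          · rcases mem_insert.1 hD with rfl | hD
            · rcases hXR C hC with h | h
              · exact Or.inl h
              · exact Or.inr (Or.inr h)
            · exact G₀.laminar C hC D hD
        · -- binary
          intro C hC
          rcases mem_insert.1 hC with rfl | hC
          · refine ⟨W1, B2, ?_, ?_, hdW, rfl, hW1neR, hB2neR⟩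
            · rcases hW1mem' with h | h
              · exact Or.inl (mem_insert_of_mem h)
              · exact Or.inr h
            · rcases hB2mem with h | h
              · exact Or.inl (mem_insert_of_mem h)
              · exact Or.inr h
          · obtain ⟨A, B, hA, hB, hd', hu', hAne, hBne⟩ := G₀.binary C hC
            refine ⟨A, B, ?_, ?_, hd', hu', hAne, hBne⟩
            · rcases hA with h | h
              · exact Or.inl (mem_insert_of_mem h)
              · exact Or.inr h
            · rcases hB with h | h
              · exact Or.inl (mem_insert_of_mem h)
              · exact Or.inr h
        · -- Le F' G
          refine ⟨hg, Function.update ψ C₀ R, ?_, ?_, ?_, ?_⟩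
          · intro x hx y hy hxy
            by_cases hxC : x = C₀ <;> by_cases hyC : y = C₀
            · rw [hxC, hyC]
            · exfalso
              rw [hxC, Function.update_self, Function.update_of_ne hyC] at hxy
              exact hRnot (hxy ▸ ψmem y (mem_erase.2 ⟨hyC, mem_coe.1 hy⟩))
            · exfalso
              rw [hyC, Function.update_self, Function.update_of_ne hxC] at hxy
              exact hRnot (hxy ▸ ψmem x (mem_erase.2 ⟨hxC, mem_coe.1 hx⟩))
            · rw [Function.update_of_ne hxC, Function.update_of_ne hyC] at hxy
              exact ψinj (mem_coe.2 (mem_erase.2 ⟨hxC, mem_coe.1 hx⟩))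
                (mem_coe.2 (mem_erase.2 ⟨hyC, mem_coe.1 hy⟩)) hxy
          · intro C hC
            by_cases h : C = C₀
            · rw [h, Function.update_self]
              exact mem_insert_self R _
            · rw [Function.update_of_ne h]
              exact mem_insert_of_mem (ψmem C (mem_erase.2 ⟨h, hC⟩))
          · intro C hC
            by_cases h : C = C₀
            · rw [h, Function.update_self]
              exact h ▸ hC₀R
            · rw [Function.update_of_ne h]
              exact ψsub C (mem_erase.2 ⟨h, hC⟩)
          · intro C hC D hD hCD
            by_cases hCc : C = C₀ <;> by_cases hDc : D = C₀
            · rw [hCc, hDc]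
            · exfalso
              rw [hCc] at hCD
              exact hDc (hC₀max D hD hCD)
            · rw [Function.update_of_ne hCc, hDc, Function.update_self]
              exact hpsiR C hC hCc (hDc ▸ hCD)
            · rw [Function.update_of_ne hCc, Function.update_of_ne hDc]
              exact ψmono C (mem_erase.2 ⟨hCc, hC⟩) D (mem_erase.2 ⟨hDc, hD⟩) hCD
        · -- Le G F
          refine ⟨rfl, Function.update χ R M, ?_, ?_, ?_, ?_⟩
          · intro x hx y hy hxy
            replace hx := mem_coe.1 hx
            replace hy := mem_coe.1 hy
            by_cases hxR : x = R <;> by_cases hyR : y = R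
            · rw [hxR, hyR]
            · exfalso
              have hyG : y ∈ G₀.clades := (mem_insert.1 hy).resolve_left hyR
              rw [hxR, Function.update_self, Function.update_of_ne hyR] at hxy
              exact (χmem' y hyG).2 hxy.symm
            · exfalso
              have hxG : x ∈ G₀.clades := (mem_insert.1 hx).resolve_left hxR
              rw [hyR, Function.update_self, Function.update_of_ne hxR] at hxy
              exact (χmem' x hxG).2 hxy
            · have hxG : x ∈ G₀.clades := (mem_insert.1 hx).resolve_left hxR
              have hyG : y ∈ G₀.clades := (mem_insert.1 hy).resolve_left hyR
              rw [Function.update_of_ne hxR, Function.update_of_ne hyR] at hxy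
              exact χinj (mem_coe.2 hxG) (mem_coe.2 hyG) hxy
          · intro C hC
            by_cases h : C = R
            · rw [h, Function.update_self]
              exact hM
            · rw [Function.update_of_ne h]
              exact (χmem' C ((mem_insert.1 hC).resolve_left h)).1
          · intro C hC
            by_cases h : C = R
            · rw [h, Function.update_self]
              exact h ▸ hRM
            · rw [Function.update_of_ne h]
              exact χsub C ((mem_insert.1 hC).resolve_left h)
          · intro C hC D hD hCD
            by_cases hCc : C = R <;> by_cases hDc : D = R
            · rw [hCc, hDc]
            · exfalso
              rw [hCc] at hCD
              exact hRnotsub D ((mem_insert.1 hD).resolve_left hDc) hCD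
            · rw [Function.update_of_ne hCc, hDc, Function.update_self]
              exact hXRchi C ((mem_insert.1 hC).resolve_left hCc) (hDc ▸ hCD)
            · rw [Function.update_of_ne hCc, Function.update_of_ne hDc]
              exact χmono C ((mem_insert.1 hC).resolve_left hCc)
                D ((mem_insert.1 hD).resolve_left hDc) hCD
        · -- cardinality
          show (insert R G₀.clades).card + 1 = F.clades.card
          rw [card_insert_of_notMem hRnot]
          have h1 : Fe.clades.card + 1 = F.clades.card := by
            rw [hFecl, card_erase_of_mem hM]
            have := card_pos.2 ⟨M, hM⟩
            omega
          omega

      · -- Case A : remove the maximal clade M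
        refine ⟨eraseTop F M hM hmax, ⟨hg, φ, hinj, ?_, hsub, hmono⟩,
          ⟨rfl, id, fun x _ y _ h => h, ?_, ?_, ?_⟩, ?_⟩
        · intro C hC
          refine mem_erase.2 ⟨?_, hmem C hC⟩
          intro h
          exact hMin (mem_image.2 ⟨C, hC, h⟩)
        · exact fun C hC => mem_of_mem_erase hC
        · exact fun C _ => Subset.rfl
        · exact fun C _ D _ h => h
        · show (F.clades.erase M).card + 1 = F.clades.card
          rw [card_erase_of_mem hM]
          have := card_pos.2 ⟨M, hM⟩
          omega

/-- A maximal clade above a given clade. -/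
lemma exists_max_above {F : Forest I} {C : Finset I} (hC : C ∈ F.clades) :
    ∃ B ∈ F.clades, C ⊆ B ∧ ∀ D ∈ F.clades, B ⊆ D → D = B := by
  obtain ⟨B, hB, hmax⟩ := exists_max_mem (F.clades.filter (C ⊆ ·))
    ⟨C, mem_filter.2 ⟨hC, Subset.rfl⟩⟩
  obtain ⟨hBm, hCB⟩ := mem_filter.1 hB
  exact ⟨B, hBm, hCB, fun D hD hBD =>
    hmax D (mem_filter.2 ⟨hD, hCB.trans hBD⟩) hBD⟩

/-- A maximal clade containing a given point. -/
lemma exists_max_point {F : Forest I} {x : I} {C : Finset I} (hC : C ∈ F.clades)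
    (hx : x ∈ C) :
    ∃ B ∈ F.clades, x ∈ B ∧ ∀ D ∈ F.clades, B ⊆ D → D = B := by
  obtain ⟨B, hB, hmax⟩ := exists_max_mem (F.clades.filter (x ∈ ·))
    ⟨C, mem_filter.2 ⟨hC, hx⟩⟩
  obtain ⟨hBm, hxB⟩ := mem_filter.1 hB
  exact ⟨B, hBm, hxB, fun D hD hBD =>
    hmax D (mem_filter.2 ⟨hD, hBD hxB⟩) hBD⟩

lemma max_disjoint {F : Forest I} {B B' : Finset I} (hB : B ∈ F.clades)
    (hB' : B' ∈ F.clades) (hmax : ∀ D ∈ F.clades, B ⊆ D → D = B)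
    (hmax' : ∀ D ∈ F.clades, B' ⊆ D → D = B') (hne : B ≠ B') : Disjoint B B' := by
  rcases F.laminar B hB B' hB' with h | h | h
  · exact absurd (hmax B' hB' h) hne.symm
  · exact absurd (hmax' B hB h) hne
  · exact h

/-- If `F` is not a tree (on nonempty ground), it is not maximal. -/
lemma exists_gt_of_not_tree (F : Forest I) (hne : F.ground.Nonempty)
    (hnotmem : F.ground ∉ F.clades) (hcard : 2 ≤ F.ground.card) :
    ∃ Fp : Forest I, Le F Fp ∧ Fp ≠ F := by
  have hBlocks : ∃ B1 B2 : Finset I,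
      (B1 ∈ F.clades ∨ ∃ x, B1 = {x}) ∧ (B2 ∈ F.clades ∨ ∃ x, B2 = {x}) ∧
      B1 ⊆ F.ground ∧ B2 ⊆ F.ground ∧ Disjoint B1 B2 ∧
      (∀ C ∈ F.clades, C ⊆ B1 ∨ C ⊆ B2 ∨ (Disjoint C B1 ∧ Disjoint C B2)) ∧
      B1 ∪ B2 ∉ F.clades := by
    rcases F.clades.eq_empty_or_nonempty with hce | hcne
    · obtain ⟨x, hx, y, hy, hxy⟩ := Finset.one_lt_card.1 hcard
      refine ⟨{x}, {y}, Or.inr ⟨x, rfl⟩, Or.inr ⟨y, rfl⟩,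
        singleton_subset_iff.2 hx, singleton_subset_iff.2 hy, ?_, ?_, ?_⟩
      · exact disjoint_singleton_right.2 (by simpa using Ne.symm hxy)
      · intro C hC
        rw [hce] at hC
        exact absurd hC (notMem_empty C)
      · rw [hce]
        exact notMem_empty _
    · obtain ⟨B1, hB1m, hB1max⟩ := exists_max_mem F.clades hcne
      have hB1g : B1 ⊆ F.ground := F.subset_ground B1 hB1m
      have hB1ssub : B1 ⊂ F.ground :=
        ssubset_of_subset_of_ne hB1g (fun h => hnotmem (h ▸ hB1m))
      obtain ⟨x, hxg, hxB1⟩ := exists_of_ssubset hB1ssub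
      by_cases hx : ∃ C ∈ F.clades, x ∈ C
      · obtain ⟨C, hCm, hxC⟩ := hx
        obtain ⟨B2, hB2m, hxB2, hB2max⟩ := exists_max_point hCm hxC
        have hB12 : B1 ≠ B2 := fun h => hxB1 (h ▸ hxB2)
        have hd : Disjoint B1 B2 :=
          max_disjoint hB1m hB2m hB1max hB2max hB12
        refine ⟨B1, B2, Or.inl hB1m, Or.inl hB2m, hB1g, F.subset_ground B2 hB2m,
          hd, ?_, ?_⟩
        · intro D hDm
          obtain ⟨B, hBm, hDB, hBmax⟩ := exists_max_above hDm
          by_cases h1 : B = B1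
          · exact Or.inl (h1 ▸ hDB)
          by_cases h2 : B = B2
          · exact Or.inr (Or.inl (h2 ▸ hDB))
          · refine Or.inr (Or.inr ⟨?_, ?_⟩)
            · exact disjoint_of_subset_left hDB (max_disjoint hBm hB1m hBmax hB1max h1)
            · exact disjoint_of_subset_left hDB (max_disjoint hBm hB2m hBmax hB2max h2)
        · intro h
          have h1 : B1 ∪ B2 = B1 := hB1max _ h subset_union_left
          obtain ⟨b, hb⟩ := clade_nonempty hB2m
          exact (Finset.not_disjoint_iff.2 ⟨b, h1 ▸ mem_union_right B1 hb, hb⟩) hd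
      · push_neg at hx
        refine ⟨B1, {x}, Or.inl hB1m, Or.inr ⟨x, rfl⟩, hB1g,
          singleton_subset_iff.2 hxg, by simpa using hxB1, ?_, ?_⟩
        · intro D hDm
          obtain ⟨B, hBm, hDB, hBmax⟩ := exists_max_above hDm
          by_cases h1 : B = B1
          · exact Or.inl (h1 ▸ hDB)
          · refine Or.inr (Or.inr ⟨?_, ?_⟩)
            · exact disjoint_of_subset_left hDB (max_disjoint hBm hB1m hBmax hB1max h1)
            · exact disjoint_singleton_right.2 (hx D hDm)
        · intro h
          exact hx _ h (mem_union_right B1 (mem_singleton_self x))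
  obtain ⟨B1, B2, hB1, hB2, hB1g, hB2g, hd, hlam, hnotm⟩ := hBlocks
  have hB1ne := item_nonempty (F := F) hB1
  have hB2ne := item_nonempty (F := F) hB2
  set N := B1 ∪ B2 with hN
  have hB1neN : B1 ≠ N := by
    intro h
    obtain ⟨b, hb⟩ := hB2ne
    exact (Finset.not_disjoint_iff.2 ⟨b, h ▸ mem_union_right B1 hb, hb⟩) hd
  have hB2neN : B2 ≠ N := by
    intro h
    obtain ⟨b, hb⟩ := hB1ne
    exact (Finset.not_disjoint_iff.2 ⟨b, h ▸ mem_union_left B2 hb, hb⟩) hd.symm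
  refine ⟨⟨F.ground, insert N F.clades, ?_, ?_, ?_⟩, ⟨rfl, id, fun a _ b _ h => h,
    ?_, fun C _ => Subset.rfl, fun C _ D _ h => h⟩, ?_⟩
  · intro C hC
    rcases mem_insert.1 hC with rfl | hC
    · exact union_subset hB1g hB2g
    · exact F.subset_ground C hC
  · intro C hC D hD
    rcases mem_insert.1 hC with rfl | hC
    · rcases mem_insert.1 hD with rfl | hD
      · exact Or.inl Subset.rfl
      · rcases hlam D hD with h | h | ⟨h1, h2⟩
        · exact Or.inr (Or.inl (h.trans subset_union_left))
        · exact Or.inr (Or.inl (h.trans subset_union_right))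
        · exact Or.inr (Or.inr (disjoint_union_left.2 ⟨h1.symm, h2.symm⟩))
    · rcases mem_insert.1 hD with rfl | hD
      · rcases hlam C hC with h | h | ⟨h1, h2⟩
        · exact Or.inl (h.trans subset_union_left)
        · exact Or.inl (h.trans subset_union_right)
        · exact Or.inr (Or.inr (disjoint_union_right.2 ⟨h1, h2⟩))
      · exact F.laminar C hC D hD
  · intro C hC
    rcases mem_insert.1 hC with rfl | hC
    · refine ⟨B1, B2, ?_, ?_, hd, rfl, hB1neN, hB2neN⟩
      · rcases hB1 with h | h
        · exact Or.inl (mem_insert_of_mem h)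
        · exact Or.inr h
      · rcases hB2 with h | h
        · exact Or.inl (mem_insert_of_mem h)
        · exact Or.inr h
    · obtain ⟨A, B, hA, hB, hd', hu', hAne, hBne⟩ := F.binary C hC
      refine ⟨A, B, ?_, ?_, hd', hu', hAne, hBne⟩
      · rcases hA with h | h
        · exact Or.inl (mem_insert_of_mem h)
        · exact Or.inr h
      · rcases hB with h | h
        · exact Or.inl (mem_insert_of_mem h)
        · exact Or.inr h
  · exact fun C hC => mem_insert_of_mem hC
  · intro h
    have := congrArg Forest.clades h
    simp only at this
    exact hnotm (this ▸ mem_insert_self N F.clades)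

/-- A tree is maximal. -/
lemma tree_maximal (F F' : Forest I) (ht : IsTree F) (hle : Le F F') : F' = F := by
  obtain ⟨hgne, hor⟩ := ht
  have hle' := hle
  obtain ⟨hg, φ, hinj, hmem, hsub, hmono⟩ := hle'
  rcases hor with hgm | hcard1
  · have h1 : φ F.ground ∈ F'.clades := hmem _ hgm
    have h2 : φ F.ground = F.ground := by
      refine subset_antisymm ?_ (hsub _ hgm)
      have := F'.subset_ground _ h1
      rwa [← hg] at this
    have hgm' : F.ground ∈ F'.clades := by rw [← h2]; exact h1
    have e1 : F.clades.card + 1 = F.ground.card := by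
      have h := card_filter_subset F (F.ground.card) F.ground le_rfl (Or.inl hgm)
      rwa [filter_true_of_mem (fun C hC => F.subset_ground C hC)] at h
    have e2 : F'.clades.card + 1 = F.ground.card := by
      have h := card_filter_subset F' (F.ground.card) F.ground le_rfl (Or.inl hgm')
      rwa [filter_true_of_mem (fun C hC => hg ▸ F'.subset_ground C hC)] at h
    exact (rigid (F'.clades.card) F F' le_rfl hle (by omega)).symm
  · have hFe : F.clades = ∅ := by
      rw [eq_empty_iff_forall_notMem]
      intro C hC
      have := two_le_card hC
      have := card_le_card (F.subset_ground C hC)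
      omega
    have hF'e : F'.clades = ∅ := by
      rw [eq_empty_iff_forall_notMem]
      intro C hC
      have := two_le_card hC
      have h2 := card_le_card (F'.subset_ground C hC)
      rw [← hg] at h2
      omega
    exact (forest_ext hg (by rw [hFe, hF'e])).symm

lemma part_two (F' F : Forest I) (hle : Le F' F) (hne : F' ≠ F)
    (hcov : ∀ G, Le F' G → Le G F → G = F' ∨ G = F) :
    F.clades.card = F'.clades.card + 1 := by
  have hle' := hle
  obtain ⟨hg, φ, hinj, hmem, hsub, hmono⟩ := hle'
  have hlec : F'.clades.card ≤ F.clades.card :=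
    card_le_card_of_injOn φ hmem hinj
  have hlt : F'.clades.card < F.clades.card := by
    rcases lt_or_eq_of_le hlec with h | h
    · exact h
    · exact absurd (rigid (F.clades.card) F' F le_rfl hle h) hne
  by_contra hne2
  obtain ⟨G, h1, h2, h3⟩ := star (F.clades.card) F' F le_rfl hle hlt
  rcases hcov G h1 h2 with h | h
  · rw [h] at h3
    omega
  · rw [h] at h3
    omega

end ForestAux

/-- in the poset of forests on a finite nonempty set `I`, the
maximal elements are exactly the trees, and the poset is ranked by the number of
inner vertices: a covering relation increases the number of inner vertices by
exactly one. -/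

theorem stmt_7 (I : Type*) [Fintype I] [DecidableEq I] [Nonempty I] :
    (∀ F : Forest I, F.ground = Finset.univ →
        ((∀ F' : Forest I, Forest.Le F F' → F' = F) ↔ F.IsTree)) ∧
    (∀ F' F : Forest I, F.ground = Finset.univ → Forest.Le F' F → F' ≠ F →
        (∀ G : Forest I, Forest.Le F' G → Forest.Le G F → G = F' ∨ G = F) →
        F.clades.card = F'.clades.card + 1) := by
  constructor
  · intro F hground
    constructor
    · intro hmax
      by_contra hnt
      have hne : F.ground.Nonempty := by rw [hground]; exact univ_nonempty
      simp only [Forest.IsTree, not_and, not_or] at hnt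
      obtain ⟨hnm, hc1⟩ := hnt hne
      have hcard2 : 2 ≤ F.ground.card := by
        have := hne.card_pos
        omega
      obtain ⟨Fp, hle, hneq⟩ := ForestAux.exists_gt_of_not_tree F hne hnm hcard2
      exact hneq (hmax Fp hle)
    · intro ht F' hle
      exact ForestAux.tree_maximal F F' ht hle
  · intro F' F _ hle hne hcov
    exact ForestAux.part_two F' F hle hne hcov
end

section
/- Let T = T1 ∨ T2 and V' = V'_1 ⊔ V'_2 ⊆ V(T) with V'_i ⊆ V(T_i), not containing the bottom vertex. Then γ(T, V') = γ(T1, V'_1) ⊔ γ(T2, V'_2), i.e., γ(T,V') is the set of disjoint unions F1 ⊔ F2 with F_i ∈ γ(T_i, V'_i). -/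
open Finset

/-! Every clade of `F ∈ γ(T1 ∨ T2, V1 ⊔ V2)` lies below its image, a vertex of `V1` or of `V2`,
hence inside the leaves of `T1` or of `T2`; so `F` splits into its restrictions to the two
leaf sets, each with the restricted injection. Conversely the injections of `F1` and `F2`
glue to one for `F1 ⊔ F2`, since their images lie in the disjoint trees `T1` and `T2`. -/

namespace Forest

variable {I : Type*} [DecidableEq I]

lemma nonempty_of_mem_clades (F : Forest I) {C : Finset I} (hC : C ∈ F.clades) :
    C.Nonempty := by
  rw [nonempty_iff_ne_empty]
  rintro rfl
  obtain ⟨A, _, _, _, _, hAB, hA, _⟩ := F.binary ∅ hC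
  exact hA (union_eq_empty.1 hAB).1

lemma not_subset_of_mem_clades {F : Forest I} {C D G H : Finset I} (hC : C ∈ F.clades)
    (hCG : C ⊆ G) (hDH : D ⊆ H) (hGH : Disjoint G H) : ¬ C ⊆ D := fun hCD =>
  (F.nonempty_of_mem_clades hC).ne_empty (disjoint_self.1 (hGH.mono hCG (hCD.trans hDH)))

lemma ne_of_mem_clades_of_disjoint {S T : Forest I} {C D : Finset I} (hC : C ∈ S.clades)
    (hD : D ∈ T.clades) (hST : Disjoint S.ground T.ground) : C ≠ D := fun hCD =>
  not_subset_of_mem_clades hC (S.subset_ground C hC) (T.subset_ground D hD) hST hCD.le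

def restrict (F : Forest I) (G : Finset I) : Forest I where
  ground := G
  clades := F.clades.filter (· ⊆ G)
  subset_ground _ hC := (mem_filter.1 hC).2
  laminar C hC D hD := F.laminar C (mem_filter.1 hC).1 D (mem_filter.1 hD).1
  binary C hC := by
    obtain ⟨hC, hCG⟩ := mem_filter.1 hC
    obtain ⟨A, B, hA, hB, hABd, rfl, hAne, hBne⟩ := F.binary _ hC
    refine ⟨A, B, ?_, ?_, hABd, rfl, hAne, hBne⟩
    · exact hA.imp_left fun hA => mem_filter.2 ⟨hA, subset_union_left.trans hCG⟩
    · exact hB.imp_left fun hB => mem_filter.2 ⟨hB, subset_union_right.trans hCG⟩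

lemma clades_eq_restrict_union {F : Forest I} {G H : Finset I}
    (h : ∀ C ∈ F.clades, C ⊆ G ∨ C ⊆ H) :
    F.clades = (F.restrict G).clades ∪ (F.restrict H).clades := by
  ext C
  simp only [restrict, mem_union, mem_filter]
  exact ⟨fun hC => (h C hC).imp (⟨hC, ·⟩) (⟨hC, ·⟩), by rintro (⟨hC, -⟩ | ⟨hC, -⟩) <;> exact hC⟩

variable {F T : Forest I} {V : Finset (Finset I)} {C : Finset I}

lemma subset_ground_of_mem_gamma (hF : F ∈ gamma T V) (hC : C ∈ F.clades) : C ⊆ T.ground :=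
  hF.1 ▸ F.subset_ground C hC

lemma exists_superset_of_mem_gamma (hF : F ∈ gamma T V) (hC : C ∈ F.clades) :
    ∃ D ∈ V, C ⊆ D := by
  obtain ⟨-, φ, -, -, hext, -, rfl⟩ := hF
  exact ⟨φ C, mem_image_of_mem φ hC, hext C hC⟩

lemma restrict_mem_gamma {S : Forest I} {W : Finset (Finset I)} (hF : F ∈ gamma T (V ∪ W))
    (hV : V ⊆ S.clades) (hW : ∀ D ∈ W, Disjoint S.ground D) :
    F.restrict S.ground ∈ gamma S V := by
  obtain ⟨-, φ, hinj, -, hext, hmono, himg⟩ := hF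
  have hφV : ∀ C ∈ F.clades, C ⊆ S.ground → φ C ∈ V := by
    intro C hC hCS
    have hφC : φ C ∈ V ∪ W := himg ▸ mem_image_of_mem φ hC
    refine (mem_union.1 hφC).resolve_right fun hW' => ?_
    exact not_subset_of_mem_clades hC hCS subset_rfl (hW _ hW') (hext C hC)
  refine ⟨rfl, φ, hinj.mono (coe_subset.2 (filter_subset _ _)), fun C hC => ?_,
    fun C hC => hext C (mem_filter.1 hC).1,
    fun C hC D hD => hmono C (mem_filter.1 hC).1 D (mem_filter.1 hD).1, ?_⟩
  · exact hV (hφV C (mem_filter.1 hC).1 (mem_filter.1 hC).2)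
  ext D
  simp only [restrict, mem_image, mem_filter]
  constructor
  · rintro ⟨C, ⟨hC, hCS⟩, rfl⟩
    exact hφV C hC hCS
  · intro hD
    obtain ⟨C, hC, rfl⟩ := mem_image.1 (himg ▸ mem_union_left W hD : D ∈ F.clades.image φ)
    exact ⟨C, ⟨hC, (hext C hC).trans (S.subset_ground _ (hV hD))⟩, rfl⟩

lemma mem_gamma_of_clades_eq_union {T1 T2 F1 F2 : Forest I} {V1 V2 : Finset (Finset I)}
    (hF1 : F1 ∈ gamma T1 V1) (hF2 : F2 ∈ gamma T2 V2) (hd : Disjoint T1.ground T2.ground)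
    (hT1 : T1.clades ⊆ T.clades) (hT2 : T2.clades ⊆ T.clades) (hg : F.ground = T.ground)
    (hc : F.clades = F1.clades ∪ F2.clades) : F ∈ gamma T (V1 ∪ V2) := by
  have hF1g : ∀ C ∈ F1.clades, C ⊆ T1.ground := fun _ => subset_ground_of_mem_gamma hF1
  have hF2g : ∀ C ∈ F2.clades, C ⊆ T2.ground := fun _ => subset_ground_of_mem_gamma hF2
  obtain ⟨-, φ1, hinj1, hmem1, hext1, hmono1, himg1⟩ := hF1
  obtain ⟨-, φ2, hinj2, hmem2, hext2, hmono2, himg2⟩ := hF2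
  let φ C := if C ⊆ T1.ground then φ1 C else φ2 C
  have hφ1 : Set.EqOn φ φ1 F1.clades := fun C hC => if_pos (hF1g C hC)
  have hφ2 : Set.EqOn φ φ2 F2.clades := fun C hC =>
    if_neg (not_subset_of_mem_clades hC (hF2g C hC) subset_rfl hd.symm)
  refine ⟨hg, φ, ?_⟩
  simp only [hc, coe_union, mem_union]
  refine ⟨?_, ?_, ?_, ?_, ?_⟩
  · rintro C (hC | hC) D (hD | hD) h
    · exact hinj1 hC hD (by rwa [hφ1 hC, hφ1 hD] at h)
    · rw [hφ1 hC, hφ2 hD] at h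
      exact absurd h (ne_of_mem_clades_of_disjoint (hmem1 C hC) (hmem2 D hD) hd)
    · rw [hφ2 hC, hφ1 hD] at h
      exact absurd h (ne_of_mem_clades_of_disjoint (hmem2 C hC) (hmem1 D hD) hd.symm)
    · exact hinj2 hC hD (by rwa [hφ2 hC, hφ2 hD] at h)
  · rintro C (hC | hC)
    · exact hφ1 hC ▸ hT1 (hmem1 C hC)
    · exact hφ2 hC ▸ hT2 (hmem2 C hC)
  · rintro C (hC | hC)
    · exact hφ1 hC ▸ hext1 C hC
    · exact hφ2 hC ▸ hext2 C hC
  · rintro C (hC | hC) D (hD | hD) hCD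
    · rw [hφ1 hC, hφ1 hD]; exact hmono1 C hC D hD hCD
    · exact absurd hCD (not_subset_of_mem_clades hC (hF1g C hC) (hF2g D hD) hd)
    · exact absurd hCD (not_subset_of_mem_clades hC (hF2g C hC) (hF1g D hD) hd.symm)
    · rw [hφ2 hC, hφ2 hD]; exact hmono2 C hC D hD hCD
  · rw [image_union, image_congr hφ1, image_congr hφ2, himg1, himg2]

end Forest

open Forest in
theorem stmt_11_general (I : Type*) [DecidableEq I] (T T1 T2 : Forest I)
    (hd : Disjoint T1.ground T2.ground)
    (hg : T.ground = T1.ground ∪ T2.ground)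
    (hc : T.clades = insert T.ground (T1.clades ∪ T2.clades))
    (V1 V2 : Finset (Finset I)) (hV1 : V1 ⊆ T1.clades) (hV2 : V2 ⊆ T2.clades) :
    Forest.gamma T (V1 ∪ V2) =
      {F : Forest I | ∃ F1 ∈ Forest.gamma T1 V1, ∃ F2 ∈ Forest.gamma T2 V2,
        F.ground = F1.ground ∪ F2.ground ∧ F.clades = F1.clades ∪ F2.clades} := by
  have hT1 : T1.clades ⊆ T.clades := hc ▸ subset_union_left.trans (subset_insert _ _)
  have hT2 : T2.clades ⊆ T.clades := hc ▸ subset_union_right.trans (subset_insert _ _)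
  ext F
  constructor
  · intro hF
    have hsplit : ∀ C ∈ F.clades, C ⊆ T1.ground ∨ C ⊆ T2.ground := fun C hC => by
      obtain ⟨D, hD, hCD⟩ := exists_superset_of_mem_gamma hF hC
      exact (mem_union.1 hD).imp (fun h => hCD.trans (T1.subset_ground D (hV1 h)))
        (fun h => hCD.trans (T2.subset_ground D (hV2 h)))
    refine ⟨F.restrict T1.ground, restrict_mem_gamma hF hV1 fun D hD => ?_,
      F.restrict T2.ground, restrict_mem_gamma (union_comm V1 V2 ▸ hF) hV2 fun D hD => ?_,
      hF.1.trans hg, clades_eq_restrict_union hsplit⟩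
    · exact hd.mono_right (T2.subset_ground D (hV2 hD))
    · exact hd.symm.mono_right (T1.subset_ground D (hV1 hD))
  · rintro ⟨F1, hF1, F2, hF2, hFg, hFc⟩
    exact mem_gamma_of_clades_eq_union hF1 hF2 hd hT1 hT2 (by rw [hFg, hF1.1, hF2.1, hg]) hFc

/-- for `T = T1 ∨ T2` and `V' = V1 ⊔ V2` not containing the bottom
vertex, `γ(T, V') = γ(T1,V1) ⊔ γ(T2,V2)`: the elements of `γ(T,V')` are exactly
the disjoint unions `F1 ⊔ F2` with `F1 ∈ γ(T1,V1)` and `F2 ∈ γ(T2,V2)`. -/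
theorem stmt_11 (I : Type*) [DecidableEq I] (T T1 T2 : Forest I)
    (h1 : T1.IsTree) (h2 : T2.IsTree) (hd : Disjoint T1.ground T2.ground)
    (hg : T.ground = T1.ground ∪ T2.ground)
    (hc : T.clades = insert T.ground (T1.clades ∪ T2.clades))
    (V1 V2 : Finset (Finset I)) (hV1 : V1 ⊆ T1.clades) (hV2 : V2 ⊆ T2.clades) :
    Forest.gamma T (V1 ∪ V2) =
      {F : Forest I | ∃ F1 ∈ Forest.gamma T1 V1, ∃ F2 ∈ Forest.gamma T2 V2,
        F.ground = F1.ground ∪ F2.ground ∧ F.clades = F1.clades ∪ F2.clades} :=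
  stmt_11_general I T T1 T2 hd hg hc V1 V2 hV1 hV2
end

section
/- Consider the free graded-commutative ℚ-algebra (in the operadic/species sense as in the paper) generated by a degree-0 symmetric binary operation E_{i,j} and a degree-1 antisymmetric binary operation Ω_{i,j}, modulo relations E_{i,⋆}∘_⋆E_{j,k} = E_{k,⋆}∘_⋆E_{i,j} and Ω_{i,⋆}∘_⋆E_{j,k} = E_{j,⋆}∘_⋆Ω_{i,k} + E_{k,⋆}∘_⋆Ω_{i,j}. Then the assignment Δ(E_{i,j}) = E_{i,j}⊗E_{i,j}, Δ(Ω_{i,j}) = E_{i,j}⊗Ω_{i,j} + Ω_{i,j}⊗E_{i,j} respects both relations: Δ applied to each relation yields an identity that holds in the tensor square. -/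
open TensorProduct

theorem stmt_17_general (V : Type*) [AddCommGroup V] [Module ℚ V] {ι : Type*}
    (EE EΩ ΩE : ι → ι → ι → V)
    (hEsym : ∀ a b c, EE a b c = EE a c b)
    (hrel1 : ∀ a b c, EE a b c = EE c a b)
    (hrel2 : ∀ a b c, ΩE a b c = EΩ b a c + EΩ c a b)
    (i j k : ι) :
    (EE i j k ⊗ₜ[ℚ] EE i j k = EE k i j ⊗ₜ[ℚ] EE k i j) ∧
    (EE i j k ⊗ₜ[ℚ] ΩE i j k + ΩE i j k ⊗ₜ[ℚ] EE i j k
      = (EE j i k ⊗ₜ[ℚ] EΩ j i k + EΩ j i k ⊗ₜ[ℚ] EE j i k)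
        + (EE k i j ⊗ₜ[ℚ] EΩ k i j + EΩ k i j ⊗ₜ[ℚ] EE k i j)) := by
  -- A transposition and a 3-cycle generate `S₃`, so `EE` is fully symmetric; what is left of
  -- the second identity is the additivity of `x ↦ e ⊗ x + x ⊗ e`.
  have hEE_kij : EE k i j = EE i j k := (hrel1 i j k).symm
  have hEE_jik : EE j i k = EE i j k := by rw [hrel1 j i k, hEsym k j i, hEE_kij]
  refine ⟨by rw [hEE_kij], ?_⟩
  rw [hEE_jik, hEE_kij, hrel2 i j k, tmul_add, add_tmul]
  abel

/-- compatibility of the coproduct of the Bessel operad with its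
defining relations. Abstractly: in any `ℚ`-module `V` (the arity-3 component),
with elements `EE a b c`, `EΩ a b c`, `ΩE a b c` representing the compositions
`E_{a,⋆}∘_⋆E_{b,c}`, `E_{a,⋆}∘_⋆Ω_{b,c}`, `Ω_{a,⋆}∘_⋆E_{b,c}`, satisfying the
symmetries of the generators and the relations
`E_{i,⋆}∘E_{j,k} = E_{k,⋆}∘E_{i,j}` and
`Ω_{i,⋆}∘E_{j,k} = E_{j,⋆}∘Ω_{i,k} + E_{k,⋆}∘Ω_{i,j}`, the coproduct
`Δ(E) = E⊗E`, `Δ(Ω) = E⊗Ω + Ω⊗E` (extended as an operad morphism, so that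
`Δ(X∘Y)` is the expansion of `Δ(X)∘Δ(Y)` in the tensor square) sends both sides
of each relation to equal elements of `V ⊗ V`. -/
theorem stmt_17 (V : Type*) [AddCommGroup V] [Module ℚ V] {ι : Type*}
    (EE EΩ ΩE : ι → ι → ι → V)
    (hEsym : ∀ a b c, EE a b c = EE a c b)
    (hΩEsym : ∀ a b c, ΩE a b c = ΩE a c b)
    (hEΩanti : ∀ a b c, EΩ a b c = - EΩ a c b)
    (hrel1 : ∀ a b c, EE a b c = EE c a b)
    (hrel2 : ∀ a b c, ΩE a b c = EΩ b a c + EΩ c a b)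
    (i j k : ι) :
    (EE i j k ⊗ₜ[ℚ] EE i j k = EE k i j ⊗ₜ[ℚ] EE k i j) ∧
    (EE i j k ⊗ₜ[ℚ] ΩE i j k + ΩE i j k ⊗ₜ[ℚ] EE i j k
      = (EE j i k ⊗ₜ[ℚ] EΩ j i k + EΩ j i k ⊗ₜ[ℚ] EE j i k)
        + (EE k i j ⊗ₜ[ℚ] EΩ k i j + EΩ k i j ⊗ₜ[ℚ] EE k i j)) :=
  stmt_17_general V EE EΩ ΩE hEsym hrel1 hrel2 i j k
end
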